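/- (Implicitly defined harmonic morphisms, k = 1.) Let W ⊆ ℂ^m × ℂ and V ⊆ ℂ be open, let f : W → ℂ and M : V → so(m,ℂ) be holomorphic, and define F(q,z) = f(q − M(z)q̄, z). Let z : U → V be a smooth map on an open set U ⊆ ℂ^m with F(q, z(q)) = 0 and (∂F/∂z)(q, z(q)) ≠ 0 for all q ∈ U. Then z is (M∘z)-holomorphic, Δz = 0 and Σ_{i=1}^{2m} (∂z/∂x^i)² = 0 on U (so z is a harmonic morphism), and z is submersive (its real differential has rank 2) at every point q at which the vector of partial derivatives of F with respect to the variables q^1,…,q^m, q̄^1,…,q̄^m, evaluated at (q, z(q)), is nonzero. -/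

import Mathlib

open Complex BigOperators Matrix

/-- Partial derivative in the direction of the real coordinate `x^{2j-1}`,
identifying `ℝ^{2m} ≅ ℂ^m` via `q^j = x^{2j-1} + i x^{2j}`. -/
noncomputable def pdRe {m : ℕ} (f : (Fin m → ℂ) → ℂ) (j : Fin m) (x : Fin m → ℂ) : ℂ :=
  fderiv ℝ f x (Pi.single j 1)

/-- Partial derivative in the direction of the real coordinate `x^{2j}`. -/
noncomputable def pdIm {m : ℕ} (f : (Fin m → ℂ) → ℂ) (j : Fin m) (x : Fin m → ℂ) : ℂ :=
  fderiv ℝ f x (Pi.single j Complex.I)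

/-- Wirtinger derivative `∂f/∂q^j = ½(∂f/∂x^{2j-1} − i ∂f/∂x^{2j})`. -/
noncomputable def wdq {m : ℕ} (f : (Fin m → ℂ) → ℂ) (j : Fin m) (x : Fin m → ℂ) : ℂ :=
  (pdRe f j x - Complex.I * pdIm f j x) / 2

/-- Wirtinger derivative `∂f/∂q̄^j = ½(∂f/∂x^{2j-1} + i ∂f/∂x^{2j})`. -/
noncomputable def wdqbar {m : ℕ} (f : (Fin m → ℂ) → ℂ) (j : Fin m) (x : Fin m → ℂ) : ℂ :=
  (pdRe f j x + Complex.I * pdIm f j x) / 2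

/-- Laplacian `Δf = Σ_{i=1}^{2m} ∂²f/(∂x^i)²`. -/
noncomputable def lap {m : ℕ} (f : (Fin m → ℂ) → ℂ) (x : Fin m → ℂ) : ℂ :=
  ∑ j, (pdRe (fun y => pdRe f j y) j x + pdIm (fun y => pdIm f j y) j x)

/-- The horizontal weak conformality quantity `Σ_{i=1}^{2m} (∂f/∂x^i)²`. -/
noncomputable def hwc {m : ℕ} (f : (Fin m → ℂ) → ℂ) (x : Fin m → ℂ) : ℂ :=
  ∑ j, ((pdRe f j x) ^ 2 + (pdIm f j x) ^ 2)

/-!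
Differentiating `F(q, z(q)) = 0` gives `dz = -(∂F/∂z)⁻¹ d_qF(·, z)`. For fixed `w`, the map
`q ↦ f(q - N q̄, w)` with `N = M(w)` is `N`-holomorphic (`∂̄_i = -Σ_j N^j_ī ∂_j`) because `f` is
holomorphic, so `z` is `(M ∘ z)`-holomorphic. Skew-symmetry of `M` turns this into
`Σ_i ∂_i z ∂̄_i z = 0`, which is horizontal weak conformality. Differentiating the holomorphy
equations once more, the terms `Σ M'^k_j ∂_j z ∂_k z` and `Σ M^k_j ∂_j ∂_k z` vanish by
skew-symmetry of `M'` and `M` against symmetric tensors, which leaves `Σ_i ∂_i ∂̄_i z = 0`, i.e.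
`Δz = 0`. Finally, if `a = ∂_q F ≠ 0` then `dz(t ā)` is a nonzero multiple of `t`, because
`Σ M_ij a_i a_j = 0`, so `dz` is onto.
-/

open Filter Topology

theorem Matrix.sum_sum_mul_eq_zero_of_transpose_eq_neg {ι R : Type*} [Fintype ι] [Ring R]
    [IsAddTorsionFree R] {A : Matrix ι ι R} (hA : Aᵀ = -A) {s : ι → ι → R}
    (hs : ∀ i j, s j i = s i j) : ∑ i, ∑ j, A j i * s i j = 0 := by
  have hA' : ∀ i j, A j i = -A i j := fun i j => by
    simpa using congrFun₂ hA i j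
  refine self_eq_neg.mp ?_
  calc ∑ i, ∑ j, A j i * s i j = ∑ i, ∑ j, A i j * s j i := Finset.sum_comm
    _ = ∑ i, ∑ j, -(A j i * s i j) :=
      Finset.sum_congr rfl fun i _ => Finset.sum_congr rfl fun j _ => by rw [hA', hs, neg_mul]
    _ = -∑ i, ∑ j, A j i * s i j := by simp only [Finset.sum_neg_distrib]

section Wirtinger

variable {m : ℕ}

noncomputable def wirtinger (L : (Fin m → ℂ) →L[ℝ] ℂ) (j : Fin m) : ℂ :=
  (L (Pi.single j 1) - I * L (Pi.single j I)) / 2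

noncomputable def wirtingerBar (L : (Fin m → ℂ) →L[ℝ] ℂ) (j : Fin m) : ℂ :=
  (L (Pi.single j 1) + I * L (Pi.single j I)) / 2

theorem wirtinger_smul (c : ℂ) (L : (Fin m → ℂ) →L[ℝ] ℂ) (j : Fin m) :
    wirtinger (c • L) j = c * wirtinger L j := by
  simp only [wirtinger, _root_.smul_apply, smul_eq_mul]; ring

theorem wirtingerBar_smul (c : ℂ) (L : (Fin m → ℂ) →L[ℝ] ℂ) (j : Fin m) :
    wirtingerBar (c • L) j = c * wirtingerBar L j := by
  simp only [wirtingerBar, _root_.smul_apply, smul_eq_mul]; ring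

theorem apply_eq_sum_wirtinger (L : (Fin m → ℂ) →L[ℝ] ℂ) (v : Fin m → ℂ) :
    L v = ∑ j, (wirtinger L j * v j + wirtingerBar L j * starRingEnd ℂ (v j)) := by
  have hsingle : ∀ j, Pi.single j (v j)
      = (v j).re • (Pi.single j 1 : Fin m → ℂ)
        + (v j).im • (Pi.single j I : Fin m → ℂ) := by
    intro j
    rw [← Pi.single_smul, ← Pi.single_smul, ← Pi.single_add]
    simp [Complex.re_add_im]
  conv_lhs => rw [← Finset.univ_sum_single v]
  simp only [map_sum, hsingle, map_add, map_smul]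
  refine Finset.sum_congr rfl fun j _ => ?_
  conv_rhs => rw [← Complex.re_add_im (v j)]
  simp only [wirtinger, wirtingerBar, Complex.real_smul, map_add, map_mul, Complex.conj_ofReal,
    Complex.conj_I]
  linear_combination (L (Pi.single j I) * (v j).im) * I_sq

-- `N j i` is the paper's `M^j_{ī}`.
def IsTwistedHolomorphic (N : Matrix (Fin m) (Fin m) ℂ) (L : (Fin m → ℂ) →L[ℝ] ℂ) :
    Prop :=
  ∀ i, wirtingerBar L i + ∑ j, N j i * wirtinger L j = 0

variable {N : Matrix (Fin m) (Fin m) ℂ} {L : (Fin m → ℂ) →L[ℝ] ℂ}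

theorem IsTwistedHolomorphic.wirtingerBar_eq (h : IsTwistedHolomorphic N L) (i : Fin m) :
    wirtingerBar L i = -∑ j, N j i * wirtinger L j :=
  eq_neg_of_add_eq_zero_left (h i)

theorem IsTwistedHolomorphic.smul (h : IsTwistedHolomorphic N L) (c : ℂ) :
    IsTwistedHolomorphic N (c • L) := fun i => by
  simp only [wirtinger_smul, wirtingerBar_smul, mul_left_comm _ c, ← Finset.mul_sum, ← mul_add,
    h i, mul_zero]

theorem IsTwistedHolomorphic.sum_wirtinger_mul_wirtingerBar (h : IsTwistedHolomorphic N L)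
    (hN : Nᵀ = -N) : ∑ i, wirtinger L i * wirtingerBar L i = 0 := by
  simp only [h.wirtingerBar_eq, mul_neg, Finset.mul_sum, Finset.sum_neg_distrib, neg_eq_zero]
  refine (Finset.sum_congr rfl fun i _ => Finset.sum_congr rfl fun j _ => ?_).trans
    (Matrix.sum_sum_mul_eq_zero_of_transpose_eq_neg hN
      (s := fun i j => wirtinger L i * wirtinger L j) fun _ _ => mul_comm _ _)
  ring

open scoped ComplexOrder in
theorem IsTwistedHolomorphic.surjective (h : IsTwistedHolomorphic N L) (hN : Nᵀ = -N)
    (hL : ∃ i, wirtinger L i ≠ 0 ∨ wirtingerBar L i ≠ 0) : Function.Surjective L := by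
  set α : Fin m → ℂ := fun j => wirtinger L j
  have hα : α ≠ 0 := by
    obtain ⟨i, hi | hi⟩ := hL
    · exact fun h0 => hi (congrFun h0 i)
    · intro h0
      refine hi ?_
      simp [h.wirtingerBar_eq, show ∀ j, wirtinger L j = 0 from congrFun h0]
  have hS : star α ⬝ᵥ α ≠ 0 := dotProduct_star_self_eq_zero.not.mpr hα
  have hβα : ∑ j, wirtingerBar L j * α j = 0 := by
    simpa only [mul_comm] using h.sum_wirtinger_mul_wirtingerBar hN
  intro w
  refine ⟨(w / (star α ⬝ᵥ α)) • star α, ?_⟩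
  rw [apply_eq_sum_wirtinger]
  simp only [Pi.smul_apply, Pi.star_apply, smul_eq_mul, map_mul, Complex.star_def,
    Complex.conj_conj]
  set t := w / star α ⬝ᵥ α
  calc ∑ j, (α j * (t * starRingEnd ℂ (α j)) + wirtingerBar L j * (starRingEnd ℂ t * α j))
      = t * star α ⬝ᵥ α + starRingEnd ℂ t * ∑ j, wirtingerBar L j * α j := by
        simp only [dotProduct, Finset.mul_sum, ← Finset.sum_add_distrib, Pi.star_apply,
          Complex.star_def]
        exact Finset.sum_congr rfl fun j _ => by ring
    _ = w := by rw [hβα, mul_zero, add_zero, div_mul_cancel₀ w hS]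

variable (N) in
noncomputable def subMulVecStar : (Fin m → ℂ) →L[ℝ] (Fin m → ℂ) :=
  LinearMap.toContinuousLinearMap
    { toFun := fun q => q - N *ᵥ star q
      map_add' := fun q r => by simp only [star_add, Matrix.mulVec_add]; abel
      map_smul' := fun c q => by
        simp only [star_smul, star_trivial, Matrix.mulVec_smul, RingHom.id_apply, smul_sub] }

theorem subMulVecStar_apply (q : Fin m → ℂ) : subMulVecStar N q = q - N *ᵥ star q := rfl

theorem comp_subMulVecStar_apply_single_I (A : (Fin m → ℂ) →L[ℂ] ℂ) (j : Fin m) :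
    (A.restrictScalars ℝ).comp (subMulVecStar N) (Pi.single j I)
      = I * (A (Pi.single j 1) + A (N *ᵥ Pi.single j 1)) := by
  have hI : (Pi.single j I : Fin m → ℂ) = I • Pi.single j 1 := by
    rw [← Pi.single_smul, smul_eq_mul, mul_one]
  simp only [ContinuousLinearMap.comp_apply, ContinuousLinearMap.coe_restrictScalars',
    subMulVecStar_apply, hI, star_smul, ← Pi.single_star, star_one, Complex.star_def,
    Complex.conj_I, Matrix.mulVec_smul, map_sub, map_smul, smul_eq_mul]
  ring

theorem wirtinger_comp_subMulVecStar (A : (Fin m → ℂ) →L[ℂ] ℂ) (j : Fin m) :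
    wirtinger ((A.restrictScalars ℝ).comp (subMulVecStar N)) j = A (Pi.single j 1) := by
  rw [wirtinger, comp_subMulVecStar_apply_single_I]
  simp only [ContinuousLinearMap.comp_apply, ContinuousLinearMap.coe_restrictScalars',
    subMulVecStar_apply, ← Pi.single_star, star_one, map_sub]
  linear_combination (-(A (Pi.single j 1) + A (N *ᵥ Pi.single j 1)) / 2) * I_sq

theorem wirtingerBar_comp_subMulVecStar (A : (Fin m → ℂ) →L[ℂ] ℂ) (j : Fin m) :
    wirtingerBar ((A.restrictScalars ℝ).comp (subMulVecStar N)) j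
      = -A (N *ᵥ Pi.single j 1) := by
  rw [wirtingerBar, comp_subMulVecStar_apply_single_I]
  simp only [ContinuousLinearMap.comp_apply, ContinuousLinearMap.coe_restrictScalars',
    subMulVecStar_apply, ← Pi.single_star, star_one, map_sub]
  linear_combination ((A (Pi.single j 1) + A (N *ᵥ Pi.single j 1)) / 2) * I_sq

theorem isTwistedHolomorphic_comp_subMulVecStar (A : (Fin m → ℂ) →L[ℂ] ℂ) :
    IsTwistedHolomorphic N ((A.restrictScalars ℝ).comp (subMulVecStar N)) := by
  intro i
  have hcol : N *ᵥ Pi.single i 1 = ∑ j, N j i • Pi.single j 1 := by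
    ext k
    simp [Matrix.mulVec, dotProduct, Pi.single_apply]
  simp only [wirtinger_comp_subMulVecStar, wirtingerBar_comp_subMulVecStar, hcol, map_sum,
    map_smul, smul_eq_mul, neg_add_cancel]

end Wirtinger

theorem fderiv_eq_neg_inv_smul_of_implicit {E : Type*} [NormedAddCommGroup E]
    [NormedSpace ℝ E] {G : E → ℂ → ℂ} {z : E → ℂ} {x₀ : E} {c : ℂ}
    (hG : DifferentiableAt ℝ (fun p : E × ℂ => G p.1 p.2) (x₀, z x₀))
    (hc : HasDerivAt (G x₀) c (z x₀)) (hc0 : c ≠ 0) (hz : DifferentiableAt ℝ z x₀)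
    (hsol : ∀ᶠ x in 𝓝 x₀, G x (z x) = 0) :
    fderiv ℝ z x₀ = -c⁻¹ • fderiv ℝ (fun x => G x (z x₀)) x₀ := by
  set L := fderiv ℝ (fun p : E × ℂ => G p.1 p.2) (x₀, z x₀)
  have hL : HasFDerivAt (fun p : E × ℂ => G p.1 p.2) L (x₀, z x₀) := hG.hasFDerivAt
  have htotal : HasFDerivAt (fun x => G x (z x))
      (L.comp ((ContinuousLinearMap.id ℝ E).prod (fderiv ℝ z x₀))) x₀ :=
    hL.comp (f := fun x => (x, z x)) x₀ ((hasFDerivAt_id x₀).prodMk hz.hasFDerivAt)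
  have htotal_zero := htotal.unique ((hasFDerivAt_const 0 x₀).congr_of_eventuallyEq hsol)
  have hpartial_x :
      HasFDerivAt (fun x => G x (z x₀)) (L.comp (ContinuousLinearMap.inl ℝ E ℂ)) x₀ :=
    hL.comp (f := fun x => (x, z x₀)) x₀ (hasFDerivAt_prodMk_left x₀ (z x₀))
  have hpartial_z : L.comp (ContinuousLinearMap.inr ℝ E ℂ)
      = ((1 : ℂ →L[ℂ] ℂ).smulRight c).restrictScalars ℝ :=
    (hL.comp (f := fun w => (x₀, w)) (z x₀) (hasFDerivAt_prodMk_right x₀ (z x₀))).unique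
      (hc.hasFDerivAt.restrictScalars ℝ)
  ext v
  have hdir_z : L (0, fderiv ℝ z x₀ v) = fderiv ℝ z x₀ v * c := by
    simpa using congr($hpartial_z (fderiv ℝ z x₀ v))
  have hdir_total : L (v, 0) + L (0, fderiv ℝ z x₀ v) = 0 := by
    rw [← map_add]
    simpa using congr($htotal_zero v)
  rw [hpartial_x.fderiv]
  simp only [_root_.smul_apply, ContinuousLinearMap.comp_apply, ContinuousLinearMap.inl_apply,
    smul_eq_mul]
  field_simp
  linear_combination hdir_total - hdir_z

section WirtingerCalculus

variable {m : ℕ} {f g : (Fin m → ℂ) → ℂ} {x : Fin m → ℂ} (j : Fin m)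

theorem wdq_add (hf : DifferentiableAt ℝ f x) (hg : DifferentiableAt ℝ g x) :
    wdq (fun y => f y + g y) j x = wdq f j x + wdq g j x := by
  simp only [wdq, pdRe, pdIm, fderiv_fun_add hf hg, _root_.add_apply]
  ring

theorem wdq_const_mul (hf : DifferentiableAt ℝ f x) (c : ℂ) :
    wdq (fun y => c * f y) j x = c * wdq f j x := by
  simp only [wdq, pdRe, pdIm, fderiv_const_mul hf, _root_.smul_apply, smul_eq_mul]
  ring

theorem wdq_mul (hf : DifferentiableAt ℝ f x) (hg : DifferentiableAt ℝ g x) :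
    wdq (fun y => f y * g y) j x = wdq f j x * g x + f x * wdq g j x := by
  simp only [wdq, pdRe, pdIm, fderiv_fun_mul hf hg, _root_.add_apply,
    _root_.smul_apply, smul_eq_mul]
  ring

theorem wdq_sum {ι : Type*} (s : Finset ι) {f : ι → (Fin m → ℂ) → ℂ}
    (hf : ∀ i ∈ s, DifferentiableAt ℝ (f i) x) :
    wdq (fun y => ∑ i ∈ s, f i y) j x = ∑ i ∈ s, wdq (f i) j x := by
  simp only [wdq, pdRe, pdIm, fderiv_fun_sum hf, _root_.sum_apply, Finset.mul_sum,
    ← Finset.sum_sub_distrib, Finset.sum_div]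

theorem wdq_comp {h : ℂ → ℂ} (hh : DifferentiableAt ℂ h (g x))
    (hg : DifferentiableAt ℝ g x) :
    wdq (fun y => h (g y)) j x = deriv h (g x) * wdq g j x := by
  have hd : HasFDerivAt (fun y => h (g y)) (deriv h (g x) • fderiv ℝ g x) x :=
    hh.hasDerivAt.comp_hasFDerivAt x hg.hasFDerivAt
  simp only [wdq, pdRe, pdIm, hd.fderiv, _root_.smul_apply, smul_eq_mul]
  ring

theorem wdq_eq_zero_of_eventuallyEq_zero (hf : f =ᶠ[𝓝 x] 0) : wdq f j x = 0 := by
  simp [wdq, pdRe, pdIm, hf.fderiv_eq]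

theorem wdq_eq_fderiv (f : (Fin m → ℂ) → ℂ) (j : Fin m) :
    wdq f j = fun y =>
      2⁻¹ * fderiv ℝ f y (Pi.single j 1) + (-I / 2) * fderiv ℝ f y (Pi.single j I) :=
  funext fun y => by simp only [wdq, pdRe, pdIm]; ring

theorem wdqbar_eq_fderiv (f : (Fin m → ℂ) → ℂ) (j : Fin m) :
    wdqbar f j = fun y =>
      2⁻¹ * fderiv ℝ f y (Pi.single j 1) + (I / 2) * fderiv ℝ f y (Pi.single j I) :=
  funext fun y => by simp only [wdqbar, pdRe, pdIm]; ring

end WirtingerCalculus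

section SecondDerivatives

variable {m : ℕ} {z : (Fin m → ℂ) → ℂ} {x : Fin m → ℂ}

theorem differentiableAt_fderiv_apply (hz : ContDiffAt ℝ 2 z x) (u : Fin m → ℂ) :
    DifferentiableAt ℝ (fun y => fderiv ℝ z y u) x :=
  ((hz.fderiv_right (m := 1) (by norm_num)).differentiableAt one_ne_zero).clm_apply
    (differentiableAt_const u)

theorem fderiv_fderiv_apply_comm (hz : ContDiffAt ℝ 2 z x) (u v : Fin m → ℂ) :
    fderiv ℝ (fun y => fderiv ℝ z y u) x v = fderiv ℝ (fun y => fderiv ℝ z y v) x u := by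
  have hd := (hz.fderiv_right (m := 1) (by norm_num)).differentiableAt one_ne_zero
  simp only [fderiv_clm_apply hd (differentiableAt_const _), fderiv_fun_const, Pi.zero_apply,
    ContinuousLinearMap.comp_zero, zero_add, ContinuousLinearMap.flip_apply]
  exact hz.isSymmSndFDerivAt (by simp) v u

theorem wdq_wdq_comm (hz : ContDiffAt ℝ 2 z x) (j k : Fin m) :
    wdq (wdq z k) j x = wdq (wdq z j) k x := by
  have hd := differentiableAt_fderiv_apply hz
  rw [wdq_eq_fderiv z, wdq_eq_fderiv z]
  simp only [wdq_add _ ((hd _).const_mul _) ((hd _).const_mul _), wdq_const_mul _ (hd _)]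
  simp only [wdq, pdRe, pdIm]
  rw [fderiv_fderiv_apply_comm hz (Pi.single k 1) (Pi.single j 1),
    fderiv_fderiv_apply_comm hz (Pi.single k 1) (Pi.single j I),
    fderiv_fderiv_apply_comm hz (Pi.single k I) (Pi.single j 1),
    fderiv_fderiv_apply_comm hz (Pi.single k I) (Pi.single j I)]
  ring

theorem lap_eq_four_mul_sum_wdq_wdqbar (hz : ContDiffAt ℝ 2 z x) :
    lap z x = 4 * ∑ j, wdq (wdqbar z j) j x := by
  have hd := differentiableAt_fderiv_apply hz
  simp only [wdqbar_eq_fderiv z]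
  simp only [wdq_add _ ((hd _).const_mul _) ((hd _).const_mul _), wdq_const_mul _ (hd _), lap,
    Finset.mul_sum]
  refine Finset.sum_congr rfl fun j _ => ?_
  simp only [wdq, pdRe, pdIm]
  rw [fderiv_fderiv_apply_comm hz (Pi.single j I) (Pi.single j 1)]
  linear_combination fderiv ℝ (fun y => fderiv ℝ z y (Pi.single j I)) x (Pi.single j I) * I_sq

theorem differentiableAt_wdq (hz : ContDiffAt ℝ 2 z x) (k : Fin m) :
    DifferentiableAt ℝ (wdq z k) x := by
  rw [wdq_eq_fderiv]
  exact ((differentiableAt_fderiv_apply hz _).const_mul _).add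
    ((differentiableAt_fderiv_apply hz _).const_mul _)

theorem differentiableAt_wdqbar (hz : ContDiffAt ℝ 2 z x) (k : Fin m) :
    DifferentiableAt ℝ (wdqbar z k) x := by
  rw [wdqbar_eq_fderiv]
  exact ((differentiableAt_fderiv_apply hz _).const_mul _).add
    ((differentiableAt_fderiv_apply hz _).const_mul _)

end SecondDerivatives

theorem hwc_eq_four_mul_sum_wdq_mul_wdqbar {m : ℕ} (f : (Fin m → ℂ) → ℂ)
    (x : Fin m → ℂ) :
    hwc f x = 4 * ∑ j, wdq f j x * wdqbar f j x := by
  rw [hwc, Finset.mul_sum]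
  refine Finset.sum_congr rfl fun j _ => ?_
  simp only [wdq, wdqbar]
  linear_combination pdIm f j x ^ 2 * I_sq

section Harmonicity

variable {m : ℕ} {z : (Fin m → ℂ) → ℂ} {x : Fin m → ℂ}
  {M : ℂ → Matrix (Fin m) (Fin m) ℂ}

theorem wdq_wdqbar_add_sum_eq_zero_of_isTwistedHolomorphic (hz : ContDiffAt ℝ 2 z x)
    (hM : ∀ i j, DifferentiableAt ℂ (fun w => M w i j) (z x))
    (hhol : ∀ᶠ y in 𝓝 x, IsTwistedHolomorphic (M (z y)) (fderiv ℝ z y)) (j : Fin m) :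
    wdq (wdqbar z j) j x + ∑ k, (deriv (fun w => M w k j) (z x) * (wdq z j x * wdq z k x)
      + M (z x) k j * wdq (wdq z k) j x) = 0 := by
  have hz1 : DifferentiableAt ℝ z x := hz.differentiableAt (by norm_num)
  have hMz : ∀ k, DifferentiableAt ℝ (fun y => M (z y) k j) x := fun k =>
    ((hM k j).restrictScalars ℝ).comp x hz1
  have hterm : ∀ k, wdq (fun y => M (z y) k j * wdq z k y) j x
      = deriv (fun w => M w k j) (z x) * (wdq z j x * wdq z k x)
        + M (z x) k j * wdq (wdq z k) j x := fun k => by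
    rw [wdq_mul j (hMz k) (differentiableAt_wdq hz k),
      wdq_comp j (h := fun w => M w k j) (hM k j) hz1]
    ring
  have hsum := wdq_eq_zero_of_eventuallyEq_zero j
    (f := fun y => wdqbar z j y + ∑ k, M (z y) k j * wdq z k y) (hhol.mono fun y hy => hy j)
  rwa [wdq_add j (differentiableAt_wdqbar hz j)
      (DifferentiableAt.fun_sum fun k _ => (hMz k).fun_mul (differentiableAt_wdq hz k)),
    wdq_sum j _ fun k _ => (hMz k).fun_mul (differentiableAt_wdq hz k),
    Finset.sum_congr rfl fun k _ => hterm k] at hsum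

theorem lap_eq_zero_of_isTwistedHolomorphic (hz : ContDiffAt ℝ 2 z x)
    (hM : ∀ i j, DifferentiableAt ℂ (fun w => M w i j) (z x))
    (hMskew : ∀ᶠ w in 𝓝 (z x), (M w)ᵀ = -M w)
    (hhol : ∀ᶠ y in 𝓝 x, IsTwistedHolomorphic (M (z y)) (fderiv ℝ z y)) :
    lap z x = 0 := by
  set M' := Matrix.of fun k j => deriv (fun w => M w k j) (z x)
  have hM' : M'ᵀ = -M' := by
    ext k j
    have hev : (fun w => M w j k) =ᶠ[𝓝 (z x)] fun w => -M w k j :=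
      hMskew.mono fun w hw => by simpa using congrFun₂ hw k j
    simp [M', hev.deriv_eq]
  calc lap z x = 4 * ∑ j, wdq (wdqbar z j) j x := lap_eq_four_mul_sum_wdq_wdqbar hz
    _ = -4 * (∑ j, ∑ k, M' k j * (wdq z j x * wdq z k x)
          + ∑ j, ∑ k, M (z x) k j * wdq (wdq z k) j x) := by
      simp only [eq_neg_of_add_eq_zero_left
          (wdq_wdqbar_add_sum_eq_zero_of_isTwistedHolomorphic hz hM hhol _),
        Finset.sum_neg_distrib, ← Finset.sum_add_distrib, M', Matrix.of_apply]
      ring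
    _ = 0 := by
      rw [Matrix.sum_sum_mul_eq_zero_of_transpose_eq_neg hM' fun _ _ => mul_comm _ _,
        Matrix.sum_sum_mul_eq_zero_of_transpose_eq_neg hMskew.self_of_nhds
          fun i j => wdq_wdq_comm hz j i]
      ring

end Harmonicity

section TwistedComposition

variable {m : ℕ} {f : (Fin m → ℂ) × ℂ → ℂ} {M : ℂ → Matrix (Fin m) (Fin m) ℂ}
  {q₀ : Fin m → ℂ} {w₀ : ℂ}

theorem differentiableAt_twisted
    (hf : DifferentiableAt ℂ f (q₀ - M w₀ *ᵥ star q₀, w₀))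
    (hM : ∀ i j, DifferentiableAt ℂ (fun w => M w i j) w₀) :
    DifferentiableAt ℝ (fun p : (Fin m → ℂ) × ℂ => f (p.1 - M p.2 *ᵥ star p.1, p.2))
      (q₀, w₀) := by
  have hfst :
      DifferentiableAt ℝ (fun p : (Fin m → ℂ) × ℂ => p.1 - M p.2 *ᵥ star p.1) (q₀, w₀) := by
    refine differentiableAt_pi.2 fun i => ?_
    simp only [Pi.sub_apply, Matrix.mulVec, dotProduct, Pi.star_apply]
    have hMr (j : Fin m) : DifferentiableAt ℝ (fun p : (Fin m → ℂ) × ℂ => M p.2 i j) (q₀, w₀) :=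
      ((hM i j).restrictScalars ℝ).comp (f := Prod.snd) (q₀, w₀) differentiableAt_snd
    fun_prop
  exact (hf.restrictScalars ℝ).comp (q₀, w₀) (hfst.prodMk differentiableAt_snd)

theorem differentiableAt_twisted_snd
    (hf : DifferentiableAt ℂ f (q₀ - M w₀ *ᵥ star q₀, w₀))
    (hM : ∀ i j, DifferentiableAt ℂ (fun w => M w i j) w₀) :
    DifferentiableAt ℂ (fun w => f (q₀ - M w *ᵥ star q₀, w)) w₀ := by
  have hfst : DifferentiableAt ℂ (fun w => q₀ - M w *ᵥ star q₀) w₀ := by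
    refine differentiableAt_pi.2 fun i => ?_
    simp only [Pi.sub_apply, Matrix.mulVec, dotProduct, Pi.star_apply]
    fun_prop
  exact hf.comp (f := fun w => (q₀ - M w *ᵥ star q₀, w)) w₀
    (hfst.prodMk differentiableAt_id)

theorem isTwistedHolomorphic_fderiv_twisted_fst {N : Matrix (Fin m) (Fin m) ℂ}
    (hf : DifferentiableAt ℂ f (q₀ - N *ᵥ star q₀, w₀)) :
    IsTwistedHolomorphic N (fderiv ℝ (fun q => f (q - N *ᵥ star q, w₀)) q₀) := by
  have hslice : DifferentiableAt ℂ (fun u => f (u, w₀)) (subMulVecStar N q₀) :=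
    hf.comp (f := fun u => (u, w₀)) _ (differentiableAt_id.prodMk (differentiableAt_const w₀))
  have hcomp := (hslice.hasFDerivAt.restrictScalars ℝ).comp q₀ (subMulVecStar N).hasFDerivAt
  rw [show (fun q => f (q - N *ᵥ star q, w₀)) = (fun u => f (u, w₀)) ∘ subMulVecStar N
    from rfl, hcomp.fderiv]
  exact isTwistedHolomorphic_comp_subMulVecStar _

theorem fderiv_eq_neg_inv_smul_of_twisted_implicit {z : (Fin m → ℂ) → ℂ}
    (hf : DifferentiableAt ℂ f (q₀ - M (z q₀) *ᵥ star q₀, z q₀))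
    (hM : ∀ i j, DifferentiableAt ℂ (fun w => M w i j) (z q₀)) (hz : DifferentiableAt ℝ z q₀)
    (hsol : ∀ᶠ q in 𝓝 q₀, f (q - M (z q) *ᵥ star q, z q) = 0)
    (hc : deriv (fun w => f (q₀ - M w *ᵥ star q₀, w)) (z q₀) ≠ 0) :
    fderiv ℝ z q₀ = -(deriv (fun w => f (q₀ - M w *ᵥ star q₀, w)) (z q₀))⁻¹
      • fderiv ℝ (fun q => f (q - M (z q₀) *ᵥ star q, z q₀)) q₀ :=
  fderiv_eq_neg_inv_smul_of_implicit (G := fun q w => f (q - M w *ᵥ star q, w))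
    (differentiableAt_twisted hf hM) (differentiableAt_twisted_snd hf hM).hasDerivAt hc hz hsol

end TwistedComposition

/-- implicitly defined harmonic morphisms, `k = 1`: if `z : U → V ⊆ ℂ`
is a smooth solution of `F(q, z(q)) = 0`, `F(q,z) = f(q − M(z)q̄, z)`, with
`(∂F/∂z)(q, z(q)) ≠ 0`, then `z` is `(M∘z)`-holomorphic, `Δz = 0` and
`Σ_i (∂z/∂x^i)² = 0` (so `z` is a harmonic morphism), and `z` is submersive at
every point where some Wirtinger partial of `F(·, z(q))` in the variables
`q^1,…,q^m,q̄^1,…,q̄^m` is nonzero. -/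
theorem implicit_harmonic_morphism_k_one {m : ℕ}
    (W : Set ((Fin m → ℂ) × ℂ)) (hW : IsOpen W)
    (V : Set ℂ) (hV : IsOpen V)
    (f : (Fin m → ℂ) × ℂ → ℂ) (hf : DifferentiableOn ℂ f W)
    (M : ℂ → Matrix (Fin m) (Fin m) ℂ)
    (hskew : ∀ v ∈ V, (M v)ᵀ = -(M v))
    (hM : ∀ i j, DifferentiableOn ℂ (fun w => M w i j) V)
    (F : (Fin m → ℂ) → ℂ → ℂ)
    (hF : ∀ q z, F q z = f (q - (M z).mulVec (fun i => starRingEnd ℂ (q i)), z))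
    (U : Set (Fin m → ℂ)) (hU : IsOpen U)
    (z : (Fin m → ℂ) → ℂ) (hz : ContDiffOn ℝ (⊤ : ℕ∞) z U)
    (hzV : Set.MapsTo z U V)
    (hmem : ∀ q ∈ U, (q - (M (z q)).mulVec (fun i => starRingEnd ℂ (q i)), z q) ∈ W)
    (hsol : ∀ q ∈ U, F q (z q) = 0)
    (hFz : ∀ q ∈ U, deriv (fun zz => F q zz) (z q) ≠ 0) :
    (∀ q ∈ U, ∀ i, wdqbar z i q + ∑ j, M (z q) j i * wdq z j q = 0)
    ∧ (∀ q ∈ U, lap z q = 0 ∧ hwc z q = 0)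
    ∧ (∀ q ∈ U,
        (∃ i, wdq (fun p => F p (z q)) i q ≠ 0 ∨ wdqbar (fun p => F p (z q)) i q ≠ 0)
        → Function.Surjective (fderiv ℝ z q)) := by
  obtain rfl : F = fun q w => f (q - M w *ᵥ star q, w) := funext₂ hF
  have hMd : ∀ q ∈ U, ∀ i j, DifferentiableAt ℂ (fun w => M w i j) (z q) := fun q hq i j =>
    (hM i j).differentiableAt (hV.mem_nhds (hzV hq))
  have hfd : ∀ q ∈ U, DifferentiableAt ℂ f (q - M (z q) *ᵥ star q, z q) := fun q hq =>
    hf.differentiableAt (hW.mem_nhds (hmem q hq))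
  have hz2 : ∀ q ∈ U, ContDiffAt ℝ 2 z q := fun q hq =>
    (hz.contDiffAt (hU.mem_nhds hq)).of_le (WithTop.coe_le_coe.mpr le_top)
  have hDz (q) (hq : q ∈ U) := fderiv_eq_neg_inv_smul_of_twisted_implicit (hfd q hq)
    (hMd q hq) ((hz2 q hq).differentiableAt (by norm_num))
    (eventually_of_mem (hU.mem_nhds hq) hsol) (hFz q hq)
  have hhol : ∀ q ∈ U, IsTwistedHolomorphic (M (z q)) (fderiv ℝ z q) := fun q hq => by
    rw [hDz q hq]
    exact (isTwistedHolomorphic_fderiv_twisted_fst (hfd q hq)).smul _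
  -- `wdq f j x` is `wirtinger (fderiv ℝ f x) j` by definition, so `hhol` is the first claim.
  refine ⟨hhol, fun q hq => ⟨?_, ?_⟩, fun q hq hex => ?_⟩
  · exact lap_eq_zero_of_isTwistedHolomorphic (hz2 q hq) (hMd q hq)
      (eventually_of_mem (hV.mem_nhds (hzV hq)) hskew) (eventually_of_mem (hU.mem_nhds hq) hhol)
  · rw [hwc_eq_four_mul_sum_wdq_mul_wdqbar]
    exact mul_eq_zero_of_right 4 ((hhol q hq).sum_wirtinger_mul_wirtingerBar (hskew _ (hzV hq)))
  · rw [hDz q hq]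
    intro w
    obtain ⟨v, hv⟩ := (isTwistedHolomorphic_fderiv_twisted_fst (hfd q hq)).surjective
      (hskew _ (hzV hq)) hex (-deriv (fun w => f (q - M w *ᵥ star q, w)) (z q) * w)
    exact ⟨v, by simp [hv, hFz q hq]⟩
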